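/- Let η ∈ W* with η_P ≠ 0, and suppose there exists a Hamiltonian n-frame for η. Let ξ ∈ W be such that for every Hamiltonian n-frame (X₁,…,Xₙ) for η, every index 1 ≤ i ≤ n, and every Y ∈ W, one has Ω(X₁,…,X_{i−1}, Y, X_{i+1},…,Xₙ, ξ) = 0. Then pr_Q ξ = 0, i.e. ξ lies in the vertical subspace {0} × P. -/

import Mathlib

open ExteriorAlgebra

set_option synthInstance.maxHeartbeats 1000000
set_option maxHeartbeats 1000000

/-- The wedge `v₁ ∧ ⋯ ∧ vₙ` of `n` vectors, as an element of the `n`-th exterior power. -/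
noncomputable def wedge {Q : Type*} [AddCommGroup Q] [Module ℝ Q] (n : ℕ) (v : Fin n → Q) :
    ⋀[ℝ]^n Q :=
  ⟨ExteriorAlgebra.ιMulti ℝ n v, ExteriorAlgebra.ιMulti_range ℝ n ⟨v, rfl⟩⟩

/-- The phase space `W = Q × P` with `Q = ℝ^(n+k)` and `P = (⋀ⁿQ)*`. -/
abbrev phaseSpace (n k : ℕ) :=
  (Fin (n + k) → ℝ) × Module.Dual ℝ (⋀[ℝ]^n (Fin (n + k) → ℝ))

/-- The canonical multisymplectic form
`Ω(w₁,…,w_{n+1}) = Σᵢ (−1)^(i−1) πᵢ(ξ₁ ∧ ⋯ ∧ ξ̂ᵢ ∧ ⋯ ∧ ξ_{n+1})` on `W = Q × P`,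
where `w_j = (ξ_j, π_j)`. -/
noncomputable def multisymp (n k : ℕ) (w : Fin (n + 1) → phaseSpace n k) : ℝ :=
  ∑ i : Fin (n + 1), (-1 : ℝ) ^ (i : ℕ) *
    (w i).2 (wedge n (fun j => (w (i.succAbove j)).1))

/-- A Hamiltonian `n`-frame for a linear form `η` on `W`: an `n`-tuple `X` of vectors of `W`
with `X₁ ∧ ⋯ ∧ Xₙ ≠ 0` satisfying the Hamilton equation `Ω(X₁,…,Xₙ,Y) = (−1)ⁿ η(Y)`. -/
noncomputable def IsHamFrame (n k : ℕ) (η : Module.Dual ℝ (phaseSpace n k))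
    (X : Fin n → phaseSpace n k) : Prop :=
  ExteriorAlgebra.ιMulti ℝ n X ≠ 0 ∧
    ∀ Y : phaseSpace n k,
      multisymp n k (Fin.snoc X Y : Fin (n + 1) → phaseSpace n k) = (-1 : ℝ) ^ n * η Y

/-!
Write `x₁, …, xₙ` for the `Q`-components of a Hamiltonian frame `X`. Feeding the vertical vector
`(0, π)` into the Hamilton equation gives `π(x₁ ∧ ⋯ ∧ xₙ) = η(0, π)`, which is nonzero for a
suitable `π`, so the `xⱼ` are linearly independent. Feeding `(0, π)` into the `i`-th slot of the
hypothesis on `ξ` gives `π(x₁ ∧ ⋯ x̂ᵢ ⋯ ∧ xₙ ∧ pr_Q ξ) = 0` for all `π`, so `pr_Q ξ` lies in the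
span of the `xⱼ` with `j ≠ i`, for every `i`; by independence these spans meet only in `0`.
-/

section LinearAlgebra

variable {K E : Type*} [Field K] [AddCommGroup E] [Module K E]

theorem ExteriorAlgebra.ιMulti_ne_zero_of_linearIndependent {n : ℕ} {v : Fin n → E}
    (hv : LinearIndependent K v) : ExteriorAlgebra.ιMulti K n v ≠ 0 := by
  have := (exteriorPower.ιMulti_family_linearIndependent_field (n := n) hv).ne_zero
    (Set.powersetCard.ofFinEmbEquiv (OrderIso.refl _).toOrderEmbedding)
  simpa [exteriorPower.ιMulti_family, Subtype.ext_iff] using this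

theorem LinearIndependent.mem_span_of_ιMulti_snoc_eq_zero {m : ℕ} {v : Fin m → E} {a : E}
    (hv : LinearIndependent K v) (h : ExteriorAlgebra.ιMulti K (m + 1) (Fin.snoc v a) = 0) :
    a ∈ Submodule.span K (Set.range v) := by
  by_contra ha
  exact ιMulti_ne_zero_of_linearIndependent (linearIndependent_finSnoc.2 ⟨hv, ha⟩) h

end LinearAlgebra

/-- The coefficient vector of `v` is the same in every expansion, hence supported on
`⋂ᵢ {i}ᶜ = ∅`. -/
theorem LinearIndependent.eq_zero_of_forall_mem_span_image_compl {R M ι : Type*} [Semiring R]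
    [AddCommMonoid M] [Module R M] [Nonempty ι] {x : ι → M} {v : M}
    (hx : LinearIndependent R x) (h : ∀ i, v ∈ Submodule.span R (x '' {i}ᶜ)) : v = 0 := by
  obtain ⟨i₀⟩ := ‹Nonempty ι›
  obtain ⟨l, -, rfl⟩ := (Finsupp.mem_span_image_iff_linearCombination R).1 (h i₀)
  suffices l = 0 by simp [this]
  ext i
  obtain ⟨l', hl', hl'l⟩ := (Finsupp.mem_span_image_iff_linearCombination R).1 (h i)
  rw [← hx hl'l]
  exact Finsupp.notMem_support_iff.1 fun hi => hl' hi rfl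

lemma wedge_eq_zero_of_apply_eq_zero {Q : Type*} [AddCommGroup Q] [Module ℝ Q] {n : ℕ} {v : Fin n → Q}
    {j : Fin n} (h : v j = 0) : wedge n v = 0 :=
  Subtype.ext ((ExteriorAlgebra.ιMulti ℝ n).map_coord_zero j h)

section Multisymplectic

variable {n k : ℕ}

/-- Every other term of `Ω` wedges the `Q`-component of the vertical vector `w i`, which is `0`. -/
theorem multisymp_of_fst_eq_zero (w : Fin (n + 1) → phaseSpace n k) {i : Fin (n + 1)}
    (hi : (w i).1 = 0) :
    multisymp n k w = (-1 : ℝ) ^ (i : ℕ) * (w i).2 (wedge n fun j => (w (i.succAbove j)).1) := by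
  refine Finset.sum_eq_single i (fun m _ hmi => ?_) (by simp)
  obtain ⟨z, hz⟩ := Fin.exists_succAbove_eq (Ne.symm hmi)
  rw [wedge_eq_zero_of_apply_eq_zero (j := z) (by rw [hz, hi]), map_zero, mul_zero]

theorem multisymp_snoc_vertical (X : Fin n → phaseSpace n k)
    (π : Module.Dual ℝ (⋀[ℝ]^n (Fin (n + k) → ℝ))) :
    multisymp n k (Fin.snoc X (0, π)) = (-1 : ℝ) ^ n * π (wedge n fun j => (X j).1) := by
  rw [multisymp_of_fst_eq_zero _ (i := Fin.last n) (by simp)]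
  simp

theorem multisymp_snoc_update_vertical {m : ℕ} (X : Fin (m + 1) → phaseSpace (m + 1) k)
    (ξ : phaseSpace (m + 1) k) (i : Fin (m + 1))
    (π : Module.Dual ℝ (⋀[ℝ]^(m + 1) (Fin (m + 1 + k) → ℝ))) :
    multisymp (m + 1) k (Fin.snoc (Function.update X i (0, π)) ξ) =
      (-1 : ℝ) ^ (i : ℕ) * π (wedge (m + 1) (Fin.snoc (fun j => (X (i.succAbove j)).1) ξ.1)) := by
  have hQ : (fun j => ((Fin.snoc (Function.update X i (0, π)) ξ :
      Fin (m + 2) → phaseSpace (m + 1) k) (i.castSucc.succAbove j)).1) =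
      Fin.snoc (fun j => (X (i.succAbove j)).1) ξ.1 := by
    funext j
    induction j using Fin.lastCases with
    | last => simp [Fin.succAbove_castSucc_of_le _ _ (Fin.le_last i)]
    | cast j => simp
  rw [multisymp_of_fst_eq_zero _ (i := i.castSucc) (by simp), hQ]
  simp

theorem IsHamFrame.linearIndependent_fst {η : Module.Dual ℝ (phaseSpace n k)}
    {X : Fin n → phaseSpace n k} (hX : IsHamFrame n k η X)
    {π : Module.Dual ℝ (⋀[ℝ]^n (Fin (n + k) → ℝ))} (hπ : η (0, π) ≠ 0) :
    LinearIndependent ℝ fun j => (X j).1 := by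
  have hη : π (wedge n fun j => (X j).1) = η (0, π) := by
    simpa [multisymp_snoc_vertical] using hX.2 (0, π)
  by_contra hdep
  apply hπ
  rw [← hη, show wedge n (fun j => (X j).1) = 0 from
    Subtype.ext ((ExteriorAlgebra.ιMulti ℝ n).map_linearDependent _ hdep), map_zero]

end Multisymplectic

theorem statement10_general (n k : ℕ) (hn : 1 ≤ n)
    (η : Module.Dual ℝ (phaseSpace n k))
    (hηP : ∃ π : Module.Dual ℝ (⋀[ℝ]^n (Fin (n + k) → ℝ)), η (0, π) ≠ 0)
    (hex : ∃ X : Fin n → phaseSpace n k, IsHamFrame n k η X)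
    (ξ : phaseSpace n k)
    (hξ : ∀ X : Fin n → phaseSpace n k, IsHamFrame n k η X →
      ∀ (i : Fin n) (Y : phaseSpace n k),
        multisymp n k
          (Fin.snoc (Function.update X i Y) ξ : Fin (n + 1) → phaseSpace n k) = 0) :
    ξ.1 = 0 := by
  obtain ⟨m, rfl⟩ := Nat.exists_eq_add_of_le' hn
  obtain ⟨X, hX⟩ := hex
  obtain ⟨π₀, hπ₀⟩ := hηP
  have hx := hX.linearIndependent_fst hπ₀
  have hwedge : ∀ i : Fin (m + 1),
      wedge (m + 1) (Fin.snoc (fun j => (X (i.succAbove j)).1) ξ.1) = 0 :=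
    fun i => (Module.forall_dual_apply_eq_zero_iff ℝ _).1 fun π => by
      have h := hξ X hX i (0, π)
      rw [multisymp_snoc_update_vertical] at h
      simpa using h
  refine hx.eq_zero_of_forall_mem_span_image_compl fun i => ?_
  rw [← Fin.range_succAbove, ← Set.range_comp]
  exact (hx.comp _ Fin.succAbove_right_injective).mem_span_of_ιMulti_snoc_eq_zero
    (congrArg Subtype.val (hwedge i))

/-- Lemma 4.4 of the paper, pointwise: if `ξ ∈ W` annihilates, through `Ω`,
all tangent vectors to the cone of decomposable `n`-vectors along Hamiltonian `n`-frames,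
then `ξ` is vertical, i.e. `pr_Q ξ = 0`. -/
theorem statement10 (n k : ℕ) (hn : 1 ≤ n) (hk : 1 ≤ k)
    (η : Module.Dual ℝ (phaseSpace n k))
    (hηP : ∃ π : Module.Dual ℝ (⋀[ℝ]^n (Fin (n + k) → ℝ)), η (0, π) ≠ 0)
    (hex : ∃ X : Fin n → phaseSpace n k, IsHamFrame n k η X)
    (ξ : phaseSpace n k)
    (hξ : ∀ X : Fin n → phaseSpace n k, IsHamFrame n k η X →
      ∀ (i : Fin n) (Y : phaseSpace n k),
        multisymp n k
          (Fin.snoc (Function.update X i Y) ξ : Fin (n + 1) → phaseSpace n k) = 0) :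
    ξ.1 = 0 :=
  statement10_general n k hn η hηP hex ξ hξ
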